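/- Let G be a torsion group with no elements of order 2. Then G ⊗ G ≅ ∇(G) × (G ∧ G); consequently J̃(G) ≅ M(G) and J(G) ≅ M(G) × ∇(G), i.e. π₂ˢ(K(G,1)) ≅ H₂(G) and π₃(SK(G,1)) ≅ H₂(G) × ∇(G). -/

import Mathlib

/- Nonabelian tensor square framework (Brown–Loday). -/

namespace NATensor

variable (G : Type*) [Group G]

/-- The relator set for the nonabelian tensor square of `G`:
`g g' ⊗ h = (ᵍg' ⊗ ᵍh)(g ⊗ h)` and `g ⊗ h h' = (g ⊗ h)(ʰg ⊗ ʰh')`. -/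
def rels : Set (FreeGroup (G × G)) :=
  {r | (∃ g g' h : G,
          r = FreeGroup.of (g * g', h) *
              (FreeGroup.of (g * g' * g⁻¹, g * h * g⁻¹) * FreeGroup.of (g, h))⁻¹) ∨
       (∃ g h h' : G,
          r = FreeGroup.of (g, h * h') *
              (FreeGroup.of (g, h) * FreeGroup.of (h * g * h⁻¹, h * h' * h⁻¹))⁻¹)}

/-- The nonabelian tensor square `G ⊗ G`. -/
abbrev TS := PresentedGroup (rels G)

variable {G}

/-- The generator `g ⊗ h` of the nonabelian tensor square. -/
def tmul (g h : G) : TS G := PresentedGroup.of (g, h)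

lemma mk_rel_eq_one {r : FreeGroup (G × G)} (hr : r ∈ rels G) :
    (PresentedGroup.mk (rels G) r : TS G) = 1 :=
  (QuotientGroup.eq_one_iff r).mpr (Subgroup.subset_normalClosure hr)

lemma tmul_rel₁ (g g' h : G) :
    tmul (g * g') h = tmul (g * g' * g⁻¹) (g * h * g⁻¹) * tmul g h := by
  have h1 := mk_rel_eq_one (G := G) (Or.inl ⟨g, g', h, rfl⟩)
  simp only [map_mul, map_inv, mul_inv_eq_one] at h1
  exact h1

lemma tmul_rel₂ (g h h' : G) :
    tmul g (h * h') = tmul g h * tmul (h * g * h⁻¹) (h * h' * h⁻¹) := by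
  have h1 := mk_rel_eq_one (G := G) (Or.inr ⟨g, h, h', rfl⟩)
  simp only [map_mul, map_inv, mul_inv_eq_one] at h1
  exact h1

variable (G)

/-- The homomorphism `κ : G ⊗ G → G`, `g ⊗ h ↦ [g,h] = g h g⁻¹ h⁻¹` (its image is `[G,G]`). -/
def kappa : TS G →* G :=
  PresentedGroup.toGroup (f := fun x : G × G => x.1 * x.2 * x.1⁻¹ * x.2⁻¹) (by
    rintro r (⟨g, g', h, rfl⟩ | ⟨g, h, h', rfl⟩) <;>
      simp only [map_mul, map_inv, FreeGroup.lift_apply_of] <;> group)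

variable {G}

@[simp] lemma kappa_tmul (g h : G) : kappa G (tmul g h) = g * h * g⁻¹ * h⁻¹ :=
  PresentedGroup.toGroup.of _

variable (G)

/-- `J(G) = ker κ ≅ π₃(SK(G,1))`. -/
def J : Subgroup (TS G) := (kappa G).ker

/-- `∇(G)`: the (normal) subgroup of `G ⊗ G` generated by the elements `x ⊗ x`. -/
def nabla : Subgroup (TS G) :=
  Subgroup.normalClosure {t | ∃ x : G, t = tmul x x}

/-- `Δ(G)`: the (normal) subgroup of `G ⊗ G` generated by the `(x ⊗ y)(y ⊗ x)`. -/
def delta : Subgroup (TS G) :=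
  Subgroup.normalClosure {t | ∃ x y : G, t = tmul x y * tmul y x}

instance : (nabla G).Normal := Subgroup.normalClosure_normal

instance : (delta G).Normal := Subgroup.normalClosure_normal

/-- The exterior square `G ∧ G = (G ⊗ G)/∇(G)`. -/
abbrev ES := TS G ⧸ nabla G

/-- The symmetric square `G ⊗̃ G = (G ⊗ G)/Δ(G)`. -/
abbrev SS := TS G ⧸ delta G

variable {G}

/-- The element `g ∧ h` of the exterior square. -/
def emul (g h : G) : ES G := QuotientGroup.mk' (nabla G) (tmul g h)

/-- The image of `g ⊗ h` in the symmetric square. -/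
def smul (g h : G) : SS G := QuotientGroup.mk' (delta G) (tmul g h)

variable {H : Type*} [Group H]

/-- The induced homomorphism `G ⊗ G → H ⊗ H` of a homomorphism `f : G → H`. -/
def tmap (f : G →* H) : TS G →* TS H :=
  PresentedGroup.toGroup (f := fun x : G × G => tmul (f x.1) (f x.2)) (by
    rintro r (⟨g, g', h, rfl⟩ | ⟨g, h, h', rfl⟩) <;>
      simp only [map_mul, map_inv, FreeGroup.lift_apply_of, mul_inv_eq_one]
    · rw [tmul_rel₁]
    · rw [tmul_rel₂])

@[simp] lemma tmap_tmul (f : G →* H) (g h : G) :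
    tmap f (tmul g h) = tmul (f g) (f h) :=
  PresentedGroup.toGroup.of _

lemma nabla_le_comap_nabla (f : G →* H) :
    nabla G ≤ MonoidHom.ker ((QuotientGroup.mk' (nabla H)).comp (tmap f)) := by
  refine Subgroup.normalClosure_le_normal ?_
  rintro _ ⟨y, rfl⟩
  simp only [SetLike.mem_coe, MonoidHom.mem_ker, MonoidHom.comp_apply, tmap_tmul,
    QuotientGroup.mk'_apply, QuotientGroup.eq_one_iff]
  exact Subgroup.subset_normalClosure ⟨f y, rfl⟩

lemma delta_le_comap_delta (f : G →* H) :
    delta G ≤ MonoidHom.ker ((QuotientGroup.mk' (delta H)).comp (tmap f)) := by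
  refine Subgroup.normalClosure_le_normal ?_
  rintro _ ⟨x, y, rfl⟩
  simp only [SetLike.mem_coe, MonoidHom.mem_ker, MonoidHom.comp_apply, map_mul, tmap_tmul,
    QuotientGroup.mk'_apply, ← QuotientGroup.mk_mul, QuotientGroup.eq_one_iff]
  exact Subgroup.subset_normalClosure ⟨f x, f y, rfl⟩

/-- The induced homomorphism `G ∧ G → H ∧ H` of a homomorphism `f : G → H`. -/
def emap (f : G →* H) : ES G →* ES H :=
  QuotientGroup.lift (nabla G) ((QuotientGroup.mk' (nabla H)).comp (tmap f))
    (fun x hx => MonoidHom.mem_ker.mp (nabla_le_comap_nabla f hx))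

@[simp] lemma emap_emul (f : G →* H) (g h : G) :
    emap f (emul g h) = emul (f g) (f h) := by
  simp [emap, emul, QuotientGroup.mk'_apply, QuotientGroup.lift_mk']
  exact congrArg (QuotientGroup.mk' (nabla H)) (tmap_tmul f g h)

/-- The induced homomorphism `G ⊗̃ G → H ⊗̃ H` of a homomorphism `f : G → H`. -/
def smap (f : G →* H) : SS G →* SS H :=
  QuotientGroup.lift (delta G) ((QuotientGroup.mk' (delta H)).comp (tmap f))
    (fun x hx => MonoidHom.mem_ker.mp (delta_le_comap_delta f hx))

variable (G)

lemma nabla_le_ker_kappa : nabla G ≤ (kappa G).ker := by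
  refine Subgroup.normalClosure_le_normal ?_
  rintro _ ⟨x, rfl⟩
  simp only [SetLike.mem_coe, MonoidHom.mem_ker, kappa_tmul]
  group

/-- The homomorphism `κ' : G ∧ G → G`, `g ∧ h ↦ [g,h]` (its image is `[G,G]`). -/
def kappa' : ES G →* G :=
  QuotientGroup.lift (nabla G) (kappa G)
    (fun x hx => MonoidHom.mem_ker.mp (nabla_le_ker_kappa G hx))

/-- The Schur multiplier `M(G) = ker κ' ≅ H₂(G)`. -/
def M : Subgroup (ES G) := (kappa' G).ker

/-- `J̃(G) = J(G)/Δ(G) ≅ π₂ˢ(K(G,1))`, realized as the image of `J(G)` in `G ⊗̃ G`. -/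
def Jt : Subgroup (SS G) := Subgroup.map (QuotientGroup.mk' (delta G)) (J G)

/-- `∇(G)/Δ(G)`, realized as the image of `∇(G)` in `G ⊗̃ G`. -/
def nablaBar : Subgroup (SS G) := Subgroup.map (QuotientGroup.mk' (delta G)) (nabla G)

end NATensor

/-!
The kernel `J(G)` of the commutator map is central in `G ⊗ G` (conjugation by `z` acts on
`G ⊗ G` through conjugation by `κ z`), so `∇(G)` is an abelian group generated by the `x ⊗ x`.
Since `(x ⊗ x)ⁿ = x ⊗ xⁿ`, every element of `∇(G)` has odd order and squaring is an automorphism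
of `∇(G)`. The symmetrization `g ⊗ h ↦ (g ⊗ h)(h ⊗ g)` is a homomorphism `G ⊗ G → Δ(G) ≤ ∇(G)`
which is squaring on `∇(G)`. Followed by the inverse of squaring it is a retraction of `G ⊗ G`
onto `∇(G)`, which splits `∇(G)` off `G ⊗ G` and off `J(G)`; it also shows `Δ(G) = ∇(G)`, so
`J̃(G) = J(G)/∇(G) = M(G)`.
-/

theorem IsOfFinOrder.odd_orderOf {A : Type*} [Monoid A] {x : A} (hx : IsOfFinOrder x)
    (h2 : ∀ g : A, g ^ 2 = 1 → g = 1) : Odd (orderOf x) := by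
  rw [Nat.odd_iff, ← Nat.two_dvd_ne_zero]
  intro h
  have hsq : orderOf (x ^ (orderOf x / 2)) = 2 := orderOf_pow_orderOf_div hx.orderOf_pos.ne' h
  have hpow := pow_orderOf_eq_one (x ^ (orderOf x / 2))
  rw [hsq] at hpow
  rw [h2 _ hpow, orderOf_one] at hsq
  exact absurd hsq (by norm_num)

theorem powMonoidHom_two_bijective {A : Type*} [CommGroup A]
    (hodd : ∀ a : A, ∃ n, Odd n ∧ a ^ n = 1) : Function.Bijective (powMonoidHom 2 : A →* A) := by
  have sq_root (a : A) : ∃ b, b ^ 2 = a := by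
    obtain ⟨n, ⟨k, rfl⟩, ha⟩ := hodd a
    exact ⟨a ^ (k + 1), by
      rw [← pow_mul, show (k + 1) * 2 = 2 * k + 1 + 1 by ring, pow_succ, ha, one_mul]⟩
  refine ⟨(injective_iff_map_eq_one _).mpr fun a ha => ?_, sq_root⟩
  obtain ⟨n, ⟨k, rfl⟩, han⟩ := hodd a
  rw [powMonoidHom_apply] at ha
  calc a = a ^ (2 * k + 1) * a := by rw [han, one_mul]
    _ = (a ^ 2) ^ (k + 1) := by rw [← pow_succ, ← pow_mul]; ring_nf
    _ = 1 := by rw [ha, one_pow]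

namespace Subgroup

variable {T : Type*} [Group T]

theorem exists_odd_pow_eq_one_of_mem_closure {S : Set T} (hS : S ⊆ center T)
    (hodd : ∀ s ∈ S, ∃ n, Odd n ∧ s ^ n = 1) {a : T} (ha : a ∈ closure S) :
    ∃ n, Odd n ∧ a ^ n = 1 := by
  induction ha using closure_induction with
  | mem s hs => exact hodd s hs
  | one => exact ⟨1, odd_one, one_pow 1⟩
  | mul a b ha _ iha ihb =>
    obtain ⟨n, hn, han⟩ := iha
    obtain ⟨m, hm, hbm⟩ := ihb
    have hab : Commute a b := (mem_center_iff.mp ((closure_le _).mpr hS ha) b).symm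
    exact ⟨n * m, hn.mul hm, by
      rw [hab.mul_pow, pow_mul, han, one_pow, one_mul, mul_comm n m, pow_mul, hbm, one_pow]⟩
  | inv a _ iha =>
    obtain ⟨n, hn, han⟩ := iha
    exact ⟨n, hn, by rw [inv_pow, han, inv_one]⟩

theorem normalClosure_eq_closure_of_subset_center {s : Set T} (hs : s ⊆ center T) :
    normalClosure s = closure s := by
  have : (closure s).Normal := ⟨fun n hn g => by
    rw [mem_center_iff.mp ((closure_le _).mpr hs hn) g, mul_inv_cancel_right]
    exact hn⟩
  exact le_antisymm (normalClosure_le_normal subset_closure) closure_le_normalClosure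

noncomputable def equivMapMkProdOfRetraction {N K : Subgroup T} [N.Normal] (hNK : N ≤ K)
    (r : T →* N) (hr : ∀ n : N, r n = n) : K ≃* K.map (QuotientGroup.mk' N) × N :=
  MulEquiv.ofBijective
    ((((QuotientGroup.mk' N).comp K.subtype).codRestrict (K.map (QuotientGroup.mk' N))
        fun k => mem_map_of_mem _ k.2).prod
      (r.comp K.subtype)) <| by
    refine ⟨(injective_iff_map_eq_one _).mpr fun k hk => ?_, ?_⟩
    · obtain ⟨hmk, hrk⟩ := Prod.ext_iff.mp hk
      have hkN : (k : T) ∈ N := (QuotientGroup.eq_one_iff _).mp (congrArg Subtype.val hmk)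
      have hk1 : (k : T) = 1 := congrArg Subtype.val ((hr ⟨k, hkN⟩).symm.trans hrk)
      exact Subtype.ext hk1
    · rintro ⟨⟨_, t, htK, rfl⟩, n⟩
      refine ⟨⟨n * (r t : T)⁻¹ * t, mul_mem (mul_mem (hNK n.2) (inv_mem (hNK (r t).2))) htK⟩, ?_⟩
      ext
      · simp
      · simp [hr]

end Subgroup

namespace NATensor

open scoped commutatorElement

variable {G : Type*} [Group G]

@[simp] lemma tmul_one (g : G) : tmul g 1 = 1 := by
  simpa using tmul_rel₂ g 1 1

-- Expand `g g' ⊗ h h'` by the defining relations in the two possible orders.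
lemma tmul_conj_mul_tmul (g h g' h' : G) :
    tmul (g * h * g' * (g * h)⁻¹) (g * h * h' * (g * h)⁻¹) * tmul g h
      = tmul g h * tmul (h * g * g' * (h * g)⁻¹) (h * g * h' * (h * g)⁻¹) := by
  have e1 : tmul (g * g') (h * h') = tmul (g * g' * g⁻¹) (g * h * g⁻¹) *
      (tmul (g * h * g' * (g * h)⁻¹) (g * h * h' * (g * h)⁻¹) * tmul g h *
        tmul (h * g * h⁻¹) (h * h' * h⁻¹)) := by
    rw [tmul_rel₁ g g' (h * h'), tmul_rel₂ g h h',
      congrArg₂ tmul rfl (by group : g * (h * h') * g⁻¹ = g * h * g⁻¹ * (g * h' * g⁻¹)),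
      tmul_rel₂ (g * g' * g⁻¹) (g * h * g⁻¹) (g * h' * g⁻¹),
      congrArg₂ tmul (by group : g * h * g⁻¹ * (g * g' * g⁻¹) * (g * h * g⁻¹)⁻¹ =
        g * h * g' * (g * h)⁻¹) (by group : g * h * g⁻¹ * (g * h' * g⁻¹) * (g * h * g⁻¹)⁻¹ =
        g * h * h' * (g * h)⁻¹)]
    simp only [mul_assoc]
  have e2 : tmul (g * g') (h * h') = tmul (g * g' * g⁻¹) (g * h * g⁻¹) *
      (tmul g h * tmul (h * g * g' * (h * g)⁻¹) (h * g * h' * (h * g)⁻¹) *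
        tmul (h * g * h⁻¹) (h * h' * h⁻¹)) := by
    rw [tmul_rel₂ (g * g') h h', tmul_rel₁ g g' h,
      congrArg₂ tmul (by group : h * (g * g') * h⁻¹ = h * g * h⁻¹ * (h * g' * h⁻¹)) rfl,
      tmul_rel₁ (h * g * h⁻¹) (h * g' * h⁻¹) (h * h' * h⁻¹),
      congrArg₂ tmul (by group : h * g * h⁻¹ * (h * g' * h⁻¹) * (h * g * h⁻¹)⁻¹ =
        h * g * g' * (h * g)⁻¹) (by group : h * g * h⁻¹ * (h * h' * h⁻¹) * (h * g * h⁻¹)⁻¹ =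
        h * g * h' * (h * g)⁻¹)]
    simp only [mul_assoc]
  exact mul_right_cancel (mul_left_cancel (e1.symm.trans e2))

lemma tmul_mul_tmul_mul_inv (g h a b : G) :
    tmul g h * tmul a b * (tmul g h)⁻¹ = tmul (⁅g, h⁆ * a * ⁅g, h⁆⁻¹) (⁅g, h⁆ * b * ⁅g, h⁆⁻¹) := by
  rw [mul_inv_eq_iff_eq_mul]
  convert (tmul_conj_mul_tmul g h ((h * g)⁻¹ * a * (h * g)) ((h * g)⁻¹ * b * (h * g))).symm
    using 3 <;> (try rw [commutatorElement_def]) <;> group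

lemma mul_tmul_mul_inv (z : TS G) (a b : G) :
    z * tmul a b * z⁻¹ = tmul (kappa G z * a * (kappa G z)⁻¹) (kappa G z * b * (kappa G z)⁻¹) := by
  have hz : z ∈ Subgroup.closure (Set.range (PresentedGroup.of : G × G → TS G)) := by
    rw [PresentedGroup.closure_range_of]; trivial
  induction hz using Subgroup.closure_induction generalizing a b with
  | mem _ hz =>
    obtain ⟨⟨g, h⟩, rfl⟩ := hz
    rw [show PresentedGroup.of (g, h) = tmul g h from rfl, kappa_tmul, ← commutatorElement_def]
    exact tmul_mul_tmul_mul_inv g h a b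
  | one => simp
  | mul x y _ _ hx hy =>
    calc x * y * tmul a b * (x * y)⁻¹ = x * (y * tmul a b * y⁻¹) * x⁻¹ := by group
      _ = _ := by rw [hy, hx, map_mul]; congr 1 <;> group
  | inv x _ hx =>
    have h := hx ((kappa G x)⁻¹ * a * kappa G x) ((kappa G x)⁻¹ * b * kappa G x)
    rw [congrArg₂ tmul (by group : kappa G x * ((kappa G x)⁻¹ * a * kappa G x) * (kappa G x)⁻¹ = a)
      (by group : kappa G x * ((kappa G x)⁻¹ * b * kappa G x) * (kappa G x)⁻¹ = b)] at h
    rw [map_inv, inv_inv, inv_inv, ← h]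
    group

lemma J_le_center : J G ≤ Subgroup.center (TS G) := by
  intro z hz
  rw [Subgroup.center_eq_iInf (PresentedGroup.closure_range_of _)]
  simp only [Subgroup.mem_iInf, Subgroup.mem_centralizer_singleton_iff, Set.forall_mem_range]
  rintro ⟨a, b⟩
  change z * tmul a b = tmul a b * z
  rw [← mul_inv_eq_iff_eq_mul]
  simpa [show kappa G z = 1 from hz] using mul_tmul_mul_inv z a b

lemma tmul_mul_tmul_swap_mem_center (a b : G) :
    tmul a b * tmul b a ∈ Subgroup.center (TS G) :=
  J_le_center (by simp only [J, MonoidHom.mem_ker, map_mul, kappa_tmul]; group)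

lemma nabla_le_center : nabla G ≤ Subgroup.center (TS G) :=
  (nabla_le_ker_kappa G).trans J_le_center

lemma nabla_eq_closure : nabla G = Subgroup.closure {t | ∃ x : G, t = tmul x x} :=
  Subgroup.normalClosure_eq_closure_of_subset_center
    (Subgroup.subset_normalClosure.trans nabla_le_center)

lemma tmul_self_pow (x : G) (n : ℕ) : tmul x (x ^ n) = tmul x x ^ n := by
  induction n with
  | zero => simp
  | succ n ih => rw [pow_succ, tmul_rel₂, ih, show x ^ n * x * (x ^ n)⁻¹ = x by group, pow_succ]

lemma tmul_mul_self (g h : G) :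
    tmul (g * h) (g * h) = tmul (g * h * g⁻¹) g * tmul g g *
      tmul (g * (g * h * g⁻¹) * g⁻¹) (g * (g * h * g⁻¹) * g⁻¹) * tmul g (g * h * g⁻¹) := by
  rw [tmul_rel₂ (g * h) g h, tmul_rel₁ g h g,
    congrArg₂ tmul (by group : g * (g * h) * g⁻¹ = g * (g * h * g⁻¹)) rfl,
    tmul_rel₁ g (g * h * g⁻¹) (g * h * g⁻¹), congrArg₂ tmul rfl (by group : g * g * g⁻¹ = g)]
  simp only [mul_assoc]

-- Modulo `∇(G)`, the expansion of `ab ⊗ ab` reads `1 = (a ⊗ b)(b ⊗ a)`.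
lemma tmul_mul_tmul_swap_mem_nabla (a b : G) : tmul a b * tmul b a ∈ nabla G := by
  have mk_diag (x : G) : (tmul x x : ES G) = 1 :=
    (QuotientGroup.eq_one_iff _).mpr (Subgroup.subset_normalClosure ⟨x, rfl⟩)
  have e := congrArg (QuotientGroup.mk : TS G → ES G) (tmul_mul_self b (b⁻¹ * a * b))
  rw [show b * (b⁻¹ * a * b) * b⁻¹ = a by group] at e
  simp only [QuotientGroup.mk_mul, mk_diag, mul_one] at e
  rw [← QuotientGroup.eq_one_iff, QuotientGroup.mk_mul]
  exact e.symm

-- `g ⊗ h ↦ (g ⊗ h)(h ⊗ g)`: the relations are respected because `(g ⊗ h)(h ⊗ g)` is central.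
variable (G) in
def symmetrize : TS G →* TS G :=
  PresentedGroup.toGroup (f := fun x : G × G => tmul x.1 x.2 * tmul x.2 x.1) <| by
    rintro r (⟨g, g', h, rfl⟩ | ⟨g, h, h', rfl⟩) <;>
      simp only [map_mul, map_inv, FreeGroup.lift_apply_of, mul_inv_eq_one]
    · rw [tmul_rel₁ g g' h, tmul_rel₂ h g g', mul_assoc _ (tmul g h), ← mul_assoc (tmul g h),
        ← Subgroup.mem_center_iff.mp (tmul_mul_tmul_swap_mem_center g h)
          (tmul (g * h * g⁻¹) (g * g' * g⁻¹)), ← mul_assoc]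
    · rw [tmul_rel₂ g h h', tmul_rel₁ h h' g, mul_assoc (tmul g h),
        ← mul_assoc (tmul (h * g * h⁻¹) _),
        ← Subgroup.mem_center_iff.mp (tmul_mul_tmul_swap_mem_center _ _) (tmul h g), ← mul_assoc]

@[simp] lemma symmetrize_tmul (g h : G) : symmetrize G (tmul g h) = tmul g h * tmul h g :=
  PresentedGroup.toGroup.of _

lemma range_symmetrize_le_delta : (symmetrize G).range ≤ delta G := by
  rw [MonoidHom.range_eq_map, ← PresentedGroup.closure_range_of, MonoidHom.map_closure,
    Subgroup.closure_le]
  rintro _ ⟨_, ⟨⟨a, b⟩, rfl⟩, rfl⟩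
  exact Subgroup.subset_normalClosure ⟨a, b, symmetrize_tmul a b⟩

lemma delta_le_nabla : delta G ≤ nabla G :=
  Subgroup.normalClosure_le_normal fun _ ⟨a, b, h⟩ => h ▸ tmul_mul_tmul_swap_mem_nabla a b

lemma symmetrize_of_mem_nabla {n : TS G} (hn : n ∈ nabla G) : symmetrize G n = n ^ 2 := by
  rw [nabla_eq_closure] at hn
  induction hn using Subgroup.closure_induction with
  | mem _ hx => obtain ⟨x, rfl⟩ := hx; rw [symmetrize_tmul, sq]
  | one => simp
  | mul x y hx _ ihx ihy =>
    have hxy : Commute x y := ((Subgroup.mem_center_iff.mp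
      (nabla_le_center (nabla_eq_closure (G := G) ▸ hx)) y)).symm
    rw [map_mul, ihx, ihy, hxy.mul_pow]
  | inv x _ ihx => rw [map_inv, ihx, inv_pow]

lemma map_mk_J_eq_M : (J G).map (QuotientGroup.mk' (nabla G)) = M G := by
  rw [J, ← QuotientGroup.lift_comp_mk' (nabla G) (kappa G) (nabla_le_ker_kappa G),
    ← MonoidHom.comap_ker,
    Subgroup.map_comap_eq_self_of_surjective (QuotientGroup.mk'_surjective _)]
  rfl

instance : IsMulCommutative (nabla G) :=
  ⟨⟨fun a b => Subtype.ext (Subgroup.mem_center_iff.mp (nabla_le_center b.2) a)⟩⟩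

section OddOrder

open scoped IsMulCommutative

variable (hodd : ∀ x : G, Odd (orderOf x))
include hodd

lemma exists_odd_pow_eq_one_of_mem_nabla {n : TS G} (hn : n ∈ nabla G) :
    ∃ k, Odd k ∧ n ^ k = 1 := by
  rw [nabla_eq_closure] at hn
  refine Subgroup.exists_odd_pow_eq_one_of_mem_closure ?_ ?_ hn
  · rintro _ ⟨x, rfl⟩
    exact nabla_le_center (Subgroup.subset_normalClosure ⟨x, rfl⟩)
  · rintro _ ⟨x, rfl⟩
    exact ⟨orderOf x, hodd x, by rw [← tmul_self_pow, pow_orderOf_eq_one, tmul_one]⟩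

variable (G) in
noncomputable def nablaSqEquiv : nabla G ≃* nabla G :=
  MulEquiv.ofBijective (powMonoidHom 2) <| powMonoidHom_two_bijective fun n => by
    obtain ⟨k, hk, hnk⟩ := exists_odd_pow_eq_one_of_mem_nabla hodd n.2
    exact ⟨k, hk, Subtype.ext (by simpa using hnk)⟩

variable (G) in
noncomputable def nablaRetraction : TS G →* nabla G :=
  (nablaSqEquiv G hodd).symm.toMonoidHom.comp ((symmetrize G).codRestrict (nabla G)
    fun t => delta_le_nabla (range_symmetrize_le_delta ⟨t, rfl⟩))

lemma nablaRetraction_coe (n : nabla G) : nablaRetraction G hodd n = n := by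
  rw [nablaRetraction, MonoidHom.comp_apply, MulEquiv.toMonoidHom_eq_coe, MonoidHom.coe_coe,
    MulEquiv.symm_apply_eq]
  exact Subtype.ext (symmetrize_of_mem_nabla n.2)

lemma delta_eq_nabla : delta G = nabla G := by
  refine le_antisymm delta_le_nabla fun n hn => ?_
  obtain ⟨m, hm⟩ := (nablaSqEquiv G hodd).surjective ⟨n, hn⟩
  have : symmetrize G m = n := by
    rw [symmetrize_of_mem_nabla m.2]
    exact congrArg Subtype.val hm
  exact this ▸ range_symmetrize_le_delta ⟨m, rfl⟩

variable (G) in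
noncomputable def tsEquivNablaProdES : TS G ≃* nabla G × ES G :=
  Subgroup.topEquiv.symm.trans <|
    (Subgroup.equivMapMkProdOfRetraction le_top _ (nablaRetraction_coe hodd)).trans <|
      (((MulEquiv.subgroupCongr (Subgroup.map_top_of_surjective _
        (QuotientGroup.mk'_surjective _))).trans Subgroup.topEquiv).prodCongr
          (MulEquiv.refl _)).trans MulEquiv.prodComm

variable (G) in
noncomputable def jEquivMProdNabla : J G ≃* M G × nabla G :=
  (Subgroup.equivMapMkProdOfRetraction (nabla_le_ker_kappa G) _ (nablaRetraction_coe hodd)).trans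
    ((MulEquiv.subgroupCongr map_mk_J_eq_M).prodCongr (MulEquiv.refl _))

lemma map_Jt_eq_M :
    (Jt G).map (QuotientGroup.quotientMulEquivOfEq (delta_eq_nabla hodd)).toMonoidHom = M G := by
  rw [Jt, Subgroup.map_map, ← map_mk_J_eq_M]
  congr 1

variable (G) in
noncomputable def jtEquivM : Jt G ≃* M G :=
  ((QuotientGroup.quotientMulEquivOfEq (delta_eq_nabla hodd)).subgroupMap (Jt G)).trans
    (MulEquiv.subgroupCongr (map_Jt_eq_M hodd))

end OddOrder

end NATensor

open NATensor in
/-- for a torsion group `G` with no elements of order 2,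
`G ⊗ G ≅ ∇(G) × (G ∧ G)`; consequently `J̃(G) ≅ M(G)` and `J(G) ≅ M(G) × ∇(G)`, i.e.
`π₂ˢ(K(G,1)) ≅ H₂(G)` and `π₃(SK(G,1)) ≅ H₂(G) × ∇(G)`. -/
theorem tensor_square_of_torsion_no_two_torsion (G : Type*) [Group G]
    (htor : ∀ g : G, IsOfFinOrder g) (h2 : ∀ g : G, g ^ 2 = 1 → g = 1) :
    Nonempty (TS G ≃* ↥(nabla G) × ES G) ∧
    Nonempty (↥(Jt G) ≃* ↥(M G)) ∧
    Nonempty (↥(J G) ≃* ↥(M G) × ↥(nabla G)) := by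
  have hodd (x : G) : Odd (orderOf x) := (htor x).odd_orderOf h2
  exact ⟨⟨tsEquivNablaProdES G hodd⟩, ⟨jtEquivM G hodd⟩, ⟨jEquivMProdNabla G hodd⟩⟩
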